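/- arXiv:1806.02815 — 2 statements merged into one kernel-verified Lean document; each statement's English description precedes it below -/
import Mathlib

section
/- Let f be a monotone submodular function with f(∅) ≥ 0, let A ⊆ Ω be a set containing T and containing an earlier snapshot T' ⊆ A (with T' ⊆ A), and suppose u ∉ A. If the best single-swap gain Δ(u, T') = max_{y ∈ T'} [f(T' ∪ {u} \ {y}) − f(T')] satisfies Δ(u, T') < (α/k)·f(T') and f(T') ≤ f(T), |T'| = k, then the marginal value satisfies f(A ∪ {u}) − f(A) ≤ ((α+1)/k)·f(T). -/
def Submodular {Ω : Type*} [DecidableEq Ω] (f : Finset Ω → ℝ) : Prop :=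
  ∀ S T : Finset Ω, S ⊆ T → ∀ x ∉ T, f (insert x T) - f T ≤ f (insert x S) - f S

/-!
Submodularity bounds `f (A ∪ {u}) - f A` by the gain of adding `u` to the subset `T'`. Since the
marginal losses `f T' - f (T' \ {y})` sum to at most `f T'`, some `y ∈ T'` has loss at most
`f T' / k`; swapping `y` for `u` then shows that adding `u` to `T'` gains at most `Δ(u, T') + f T' / k`.
-/

open Finset

namespace Submodular

variable {Ω : Type*} [DecidableEq Ω] {f : Finset Ω → ℝ}

theorem sub_erase_le (hf : Submodular f) {S T : Finset Ω} (hST : S ⊆ T) {y : Ω} (hy : y ∈ S) :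
    f T - f (T.erase y) ≤ f S - f (S.erase y) := by
  have h := hf (S.erase y) (T.erase y) (erase_subset_erase y hST) y (notMem_erase y T)
  rwa [insert_erase hy, insert_erase (hST hy)] at h

theorem sum_sub_erase_le (hf : Submodular f) (S : Finset Ω) :
    ∑ y ∈ S, (f S - f (S.erase y)) ≤ f S - f ∅ := by
  induction S using Finset.induction_on with
  | empty => simp
  | insert a S ha ih =>
    have hterm : ∀ y ∈ S, f (insert a S) - f ((insert a S).erase y) ≤ f S - f (S.erase y) :=
      fun y hy => hf.sub_erase_le (subset_insert a S) hy
    rw [sum_insert ha, erase_insert ha]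
    linarith [sum_le_sum hterm]

theorem exists_sub_erase_le_div_card (hf : Submodular f) (h0 : 0 ≤ f ∅) {S : Finset Ω}
    (hS : S.Nonempty) : ∃ y ∈ S, f S - f (S.erase y) ≤ f S / #S := by
  have hcard : (0 : ℝ) < #S := by exact_mod_cast hS.card_pos
  refine exists_le_of_sum_le hS ?_
  rw [sum_const, nsmul_eq_mul, mul_div_cancel₀ _ hcard.ne']
  linarith [hf.sum_sub_erase_le S]

theorem sub_le_sup'_swap_add_div_card (hf : Submodular f) (h0 : 0 ≤ f ∅) {S : Finset Ω}
    (hS : S.Nonempty) {u : Ω} (hu : u ∉ S) :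
    f (insert u S) - f S ≤
      S.sup' hS (fun y => f (insert u (S.erase y)) - f S) + f S / #S := by
  obtain ⟨y, hy, hloss⟩ := hf.exists_sub_erase_le_div_card h0 hS
  have hyu : y ≠ u := by rintro rfl; exact hu hy
  have hswap := hf.sub_erase_le (subset_insert u S) hy
  rw [erase_insert_of_ne hyu.symm] at hswap
  have hgain := le_sup' (fun y => f (insert u (S.erase y)) - f S) hy
  linarith

end Submodular

theorem stmt_2_general {Ω : Type*} [DecidableEq Ω] (f : Finset Ω → ℝ)
    (hsub : Submodular f) (h0 : 0 ≤ f ∅)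
    (α : ℝ) (hα : 0 < α) (k : ℕ)
    (A T T' : Finset Ω) (hT'A : T' ⊆ A) (hT'k : T'.card = k)
    (hT'ne : T'.Nonempty)
    (u : Ω) (hu : u ∉ A)
    (hΔ : T'.sup' hT'ne (fun y => f (insert u (T'.erase y)) - f T') < α / k * f T')
    (hTT' : f T' ≤ f T) :
    f (insert u A) - f A ≤ (α + 1) / k * f T := by
  have hA : f (insert u A) - f A ≤ f (insert u T') - f T' := hsub T' A hT'A u hu
  have hT' := hsub.sub_le_sup'_swap_add_div_card h0 hT'ne (fun h => hu (hT'A h))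
  rw [hT'k] at hT'
  calc f (insert u A) - f A ≤ α / k * f T' + f T' / k := by linarith
    _ = (α + 1) / k * f T' := by ring
    _ ≤ (α + 1) / k * f T := by gcongr

theorem stmt_2 {Ω : Type*} [DecidableEq Ω] (f : Finset Ω → ℝ)
    (hsub : Submodular f) (hmono : Monotone f) (h0 : 0 ≤ f ∅)
    (α : ℝ) (hα : 0 < α) (k : ℕ) (hk : 0 < k)
    (A T T' : Finset Ω) (hT'A : T' ⊆ A) (hT'k : T'.card = k)
    (hT'ne : T'.Nonempty)
    (u : Ω) (hu : u ∉ A)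
    (hΔ : T'.sup' hT'ne (fun y => f (insert u (T'.erase y)) - f T') < α / k * f T')
    (hTT' : f T' ≤ f T) :
    f (insert u A) - f A ≤ (α + 1) / k * f T :=
  stmt_2_general f hsub h0 α hα k A T T' hT'A hT'k hT'ne u hu hΔ hTT'
end

section
/- Maintained-solution invariant: Let f be monotone submodular with f(∅) ≥ 0 and α > 0. Suppose sets T and A are built as follows: starting from T = ∅ and A = ∅, at each step either nothing changes, or (if |T| < k) an element u with f(u | T) ≥ (α/k)f(T) is added to both T and A, or (if |T| = k) an element u is added to A and swapped into T via the best-swap rule provided Δ(u, T) ≥ (α/k)f(T). Then at every step f(T) ≥ (α/(α+1))·f(A). -/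
lemma sum_erase_le {Ω : Type*} [DecidableEq Ω] (f : Finset Ω → ℝ)
    (hsub : Submodular f) :
    ∀ T : Finset Ω, ∑ y ∈ T, (f T - f (T.erase y)) ≤ f T - f ∅ := by
  intro T
  induction T using Finset.induction with
  | empty => simp
  | @insert a S ha ih =>
    rw [Finset.sum_insert ha, Finset.erase_insert ha]
    have hterm : ∀ y ∈ S, f (insert a S) - f ((insert a S).erase y)
        ≤ f S - f (S.erase y) := by
      intro y hy
      have hya : y ≠ a := fun h => ha (h ▸ hy)
      rw [Finset.erase_insert_of_ne (Ne.symm hya)]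
      have hnot : y ∉ insert a (S.erase y) := by
        simp [hya, Finset.notMem_erase]
      have := hsub (S.erase y) (insert a (S.erase y))
        (Finset.subset_insert _ _) y hnot
      rwa [Finset.insert_erase hy, Finset.insert_comm, Finset.insert_erase hy] at this
    have hsum : ∑ y ∈ S, (f (insert a S) - f ((insert a S).erase y))
        ≤ ∑ y ∈ S, (f S - f (S.erase y)) := Finset.sum_le_sum hterm
    linarith [ih]

theorem stmt_3 {Ω : Type*} [DecidableEq Ω] (f : Finset Ω → ℝ)
    (hsub : Submodular f) (hmono : Monotone f) (h0 : 0 ≤ f ∅)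
    (α : ℝ) (hα : 0 < α) (k : ℕ) (hk : 0 < k)
    (T A : ℕ → Finset Ω) (hT0 : T 0 = ∅) (hA0 : A 0 = ∅)
    (hstep : ∀ t,
      (T (t + 1) = T t ∧ A (t + 1) = A t) ∨
      (∃ u, u ∉ A t ∧ (T t).card < k ∧
        f (insert u (T t)) - f (T t) ≥ α / k * f (T t) ∧
        T (t + 1) = insert u (T t) ∧ A (t + 1) = insert u (A t)) ∨
      (∃ u, u ∉ A t ∧ (T t).card = k ∧ ∃ y ∈ T t,
        (∀ z ∈ T t, f (insert u ((T t).erase z)) ≤ f (insert u ((T t).erase y))) ∧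
        f (insert u ((T t).erase y)) - f (T t) ≥ α / k * f (T t) ∧
        T (t + 1) = insert u ((T t).erase y) ∧ A (t + 1) = insert u (A t))) :
    ∀ t, f (T t) ≥ α / (α + 1) * f (A t) := by
  have hα1 : (0:ℝ) < α + 1 := by linarith
  have hkR : (0:ℝ) < (k:ℝ) := by exact_mod_cast hk
  have hc0 : 0 ≤ α / (α + 1) := by positivity
  have hc1 : α / (α + 1) ≤ 1 := by
    rw [div_le_one hα1]; linarith
  have hTA : ∀ t, T t ⊆ A t := by
    intro t
    induction t with
    | zero => rw [hT0, hA0]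
    | succ t ih =>
      rcases hstep t with ⟨h1, h2⟩ | ⟨u, hu, _, _, hT, hA⟩ |
        ⟨u, hu, _, y, hy, _, _, hT, hA⟩
      · rw [h1, h2]; exact ih
      · rw [hT, hA]; exact Finset.insert_subset_insert u ih
      · rw [hT, hA]
        exact Finset.insert_subset_insert u ((Finset.erase_subset _ _).trans ih)
  have hfT0 : ∀ t, 0 ≤ f (T t) := fun t =>
    h0.trans (hmono (Finset.empty_subset _))
  intro t
  induction t with
  | zero =>
    rw [hT0, hA0]
    nlinarith [h0, hc1]
  | succ t ih =>
    rcases hstep t with ⟨h1, h2⟩ | ⟨u, hu, _, _, hT, hA⟩ |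
      ⟨u, hu, hcard, y, hy, hmax, hgain, hT, hA⟩
    · rw [h1, h2]; exact ih
    · rw [hT, hA]
      have key : f (insert u (A t)) - f (A t) ≤ f (insert u (T t)) - f (T t) :=
        hsub _ _ (hTA t) u hu
      have hmonoT : f (T t) ≤ f (insert u (T t)) :=
        hmono (Finset.subset_insert _ _)
      nlinarith [ih, key, hmonoT, hc0, hc1]
    · rw [hT, hA]
      -- find y' with small marginal loss
      have hTne : (T t).Nonempty := Finset.card_pos.mp (hcard ▸ hk)
      have hsum : ∑ y' ∈ T t, (f (T t) - f ((T t).erase y'))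
          ≤ ∑ y' ∈ T t, f (T t) / k := by
        rw [Finset.sum_const, hcard, nsmul_eq_mul, mul_div_cancel₀ _ (ne_of_gt hkR)]
        linarith [sum_erase_le f hsub (T t), h0]
      obtain ⟨y', hy', hy'le⟩ := Finset.exists_le_of_sum_le hTne hsum
      -- submodularity chain
      have hy'u : y' ≠ u := fun h => hu (h ▸ hTA t hy')
      have hnot : y' ∉ insert u ((T t).erase y') := by
        simp [hy'u, Finset.notMem_erase]
      have hB := hsub ((T t).erase y') (insert u ((T t).erase y'))
        (Finset.subset_insert _ _) y' hnot
      rw [Finset.insert_erase hy', Finset.insert_comm, Finset.insert_erase hy'] at hB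
      have hC : f (insert u ((T t).erase y')) ≤ f (insert u ((T t).erase y)) :=
        hmax y' hy'
      have key : f (insert u (A t)) - f (A t) ≤ f (insert u (T t)) - f (T t) :=
        hsub _ _ (hTA t) u hu
      have hchain : f (insert u (A t)) ≤ f (A t) + f (T t) / k +
          (f (insert u ((T t).erase y)) - f (T t)) := by linarith
      have hfT := hfT0 t
      -- final arithmetic
      rw [ge_iff_le, div_mul_eq_mul_div, div_le_iff₀ hα1] at ih ⊢
      rw [ge_iff_le, div_mul_eq_mul_div, div_le_iff₀ hkR] at hgain
      have hchain' : (k:ℝ) * f (insert u (A t)) ≤ (k:ℝ) * f (A t) + f (T t) +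
          (k:ℝ) * (f (insert u ((T t).erase y)) - f (T t)) := by
        have := mul_le_mul_of_nonneg_left hchain hkR.le
        field_simp at this ⊢
        linarith
      nlinarith [mul_le_mul_of_nonneg_left hchain' hα.le,
        mul_le_mul_of_nonneg_right ih hkR.le, hgain, hfT, hkR, hα]
end
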